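/- arXiv:2605.21317 — 2 statements merged into one kernel-verified Lean document; each statement's English description precedes it below -/
import Mathlib

section
/- Let d, N ≥ 1, let f_1, …, f_N : ℝ^d → ℝ be differentiable with L-Lipschitz gradients, and suppose ‖∇f_i(θ)‖ ≤ G_f for all i and θ. Fix a local learning rate η_l > 0 and, for each client i, a number K_i ≥ 1 of local steps. For any starting point θ ∈ ℝ^d, define the local gradient-descent trajectory θ_i^{0} = θ and θ_i^{k+1} = θ_i^{k} − η_l ∇f_i(θ_i^{k}) for 0 ≤ k ≤ K_i − 1, and the accumulated client update g_i = θ − θ_i^{K_i} = η_l · Σ_{k=0}^{K_i−1} ∇f_i(θ_i^{k}). Then g_i = η_l K_i ∇f_i(θ) + e_i, where the drift e_i := η_l · Σ_{k=0}^{K_i−1} (∇f_i(θ_i^{k}) − ∇f_i(θ)) satisfies ‖e_i‖ ≤ (L G_f / 2) · η_l² · K_i (K_i − 1). -/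
/-!
The `k`-th local iterate differs from `θ` by `k` gradient steps, so `‖θᵢᵏ - θ‖ ≤ |η| G_f k`,
and by `L`-smoothness each summand of the drift has norm at most `L |η| G_f k`.
Summing over `k < K` gives `L G_f η² K (K - 1) / 2`.
-/

open scoped InnerProductSpace BigOperators

noncomputable def traj {E : Type*} [NormedAddCommGroup E] [InnerProductSpace ℝ E]
    [CompleteSpace E] (f : E → ℝ) (ηl : ℝ) (θ : E) : ℕ → E
  | 0 => θ
  | k + 1 => traj f ηl θ k - ηl • gradient f (traj f ηl θ k)

open Finset

theorem sum_range_natCast_id (n : ℕ) : ∑ k ∈ range n, (k : ℝ) = n * (n - 1) / 2 := by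
  induction n with
  | zero => simp
  | succ n ih => rw [sum_range_succ, ih]; push_cast; ring

theorem smul_sum_eq_smul_card_add_smul_sum_sub {R E ι : Type*} [Ring R] [AddCommGroup E]
    [Module R E] (η : R) (s : Finset ι) (v : ι → E) (w : E) :
    η • ∑ k ∈ s, v k = (η * #s) • w + η • ∑ k ∈ s, (v k - w) := by
  rw [sum_sub_distrib, sum_const, smul_sub, mul_smul, ← Nat.cast_smul_eq_nsmul R]
  abel

theorem nonneg_of_forall_norm_sub_le_mul_norm_sub {E F : Type*} [NormedAddCommGroup E]
    [Nontrivial E] [SeminormedAddCommGroup F] {g : E → F} {L : ℝ}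
    (h : ∀ x y, ‖g x - g y‖ ≤ L * ‖x - y‖) : 0 ≤ L := by
  obtain ⟨x, hx⟩ := exists_ne (0 : E)
  exact nonneg_of_mul_nonneg_left ((norm_nonneg _).trans (h x 0)) (by simpa using hx)

section traj

variable {E : Type*} [NormedAddCommGroup E] [InnerProductSpace ℝ E] [CompleteSpace E]
  {f : E → ℝ} {η : ℝ}

theorem sub_traj_eq_smul_sum (θ : E) (n : ℕ) :
    θ - traj f η θ n = η • ∑ k ∈ range n, gradient f (traj f η θ k) := by
  induction n with
  | zero => simp [traj]
  | succ n ih =>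
    rw [sum_range_succ, smul_add, ← ih, traj]
    abel

theorem norm_traj_sub_le {G : ℝ} (hG : ∀ x, ‖gradient f x‖ ≤ G) (θ : E) (n : ℕ) :
    ‖traj f η θ n - θ‖ ≤ |η| * G * n := by
  rw [← norm_neg, neg_sub, sub_traj_eq_smul_sum, norm_smul, Real.norm_eq_abs, mul_assoc]
  gcongr
  simpa [mul_comm] using norm_sum_le_of_le (range n) fun k _ => hG (traj f η θ k)

theorem norm_smul_sum_gradient_traj_sub_le {L G : ℝ} (hL : 0 ≤ L)
    (hLip : ∀ x y, ‖gradient f x - gradient f y‖ ≤ L * ‖x - y‖)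
    (hG : ∀ x, ‖gradient f x‖ ≤ G) (θ : E) (n : ℕ) :
    ‖η • ∑ k ∈ range n, (gradient f (traj f η θ k) - gradient f θ)‖ ≤
      L * G / 2 * η ^ 2 * n * (n - 1) := by
  calc ‖η • ∑ k ∈ range n, (gradient f (traj f η θ k) - gradient f θ)‖
      = |η| * ‖∑ k ∈ range n, (gradient f (traj f η θ k) - gradient f θ)‖ := by
        rw [norm_smul, Real.norm_eq_abs]
    _ ≤ |η| * ∑ k ∈ range n, L * (|η| * G * k) := by
        gcongr
        exact norm_sum_le_of_le _ fun k _ =>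
          (hLip _ _).trans (mul_le_mul_of_nonneg_left (norm_traj_sub_le hG θ k) hL)
    _ = L * G / 2 * η ^ 2 * n * (n - 1) := by
        simp_rw [← mul_sum, sum_range_natCast_id]
        linear_combination (L * G / 2 * n * (n - 1)) * sq_abs η

end traj

theorem local_drift_bound_general {d N : ℕ} (hd : 1 ≤ d)
    (f : Fin N → EuclideanSpace ℝ (Fin d) → ℝ) (L Gf ηl : ℝ)
    (hLip : ∀ i x y, ‖gradient (f i) x - gradient (f i) y‖ ≤ L * ‖x - y‖)
    (hGf : ∀ i x, ‖gradient (f i) x‖ ≤ Gf)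
    (K : Fin N → ℕ)
    (θ : EuclideanSpace ℝ (Fin d)) (i : Fin N)
    (g e : EuclideanSpace ℝ (Fin d))
    (hg : g = θ - traj (f i) ηl θ (K i))
    (he : e = ηl • ∑ k ∈ Finset.range (K i),
        (gradient (f i) (traj (f i) ηl θ k) - gradient (f i) θ)) :
    g = ηl • ∑ k ∈ Finset.range (K i), gradient (f i) (traj (f i) ηl θ k) ∧
    g = (ηl * (K i : ℝ)) • gradient (f i) θ + e ∧
    ‖e‖ ≤ L * Gf / 2 * ηl ^ 2 * (K i : ℝ) * ((K i : ℝ) - 1) := by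
  have hsum := sub_traj_eq_smul_sum (f := f i) (η := ηl) θ (K i)
  have : Nonempty (Fin d) := ⟨⟨0, hd⟩⟩
  have hL : 0 ≤ L := nonneg_of_forall_norm_sub_le_mul_norm_sub (hLip i)
  refine ⟨hg.trans hsum, ?_, ?_⟩
  · rw [hg, hsum, he, smul_sum_eq_smul_card_add_smul_sum_sub, card_range]
  · rw [he]
    exact norm_smul_sum_gradient_traj_sub_le hL (hLip i) (hGf i) θ (K i)

/-- **Local drift bound.** The accumulated client update
`gᵢ = θ − θᵢ^{Kᵢ} = ηl • Σ_{k<Kᵢ} ∇fᵢ(θᵢ^k)` decomposes as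
`gᵢ = ηl Kᵢ ∇fᵢ(θ) + eᵢ` with `‖eᵢ‖ ≤ (L G_f/2) ηl² Kᵢ (Kᵢ − 1)`. -/
theorem local_drift_bound {d N : ℕ} (hd : 1 ≤ d) (hN : 1 ≤ N)
    (f : Fin N → EuclideanSpace ℝ (Fin d) → ℝ) (L Gf ηl : ℝ)
    (hdiff : ∀ i, Differentiable ℝ (f i))
    (hLip : ∀ i x y, ‖gradient (f i) x - gradient (f i) y‖ ≤ L * ‖x - y‖)
    (hGf : ∀ i x, ‖gradient (f i) x‖ ≤ Gf)
    (hηl : 0 < ηl)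
    (K : Fin N → ℕ) (hK : ∀ i, 1 ≤ K i)
    (θ : EuclideanSpace ℝ (Fin d)) (i : Fin N)
    (g e : EuclideanSpace ℝ (Fin d))
    (hg : g = θ - traj (f i) ηl θ (K i))
    (he : e = ηl • ∑ k ∈ Finset.range (K i),
        (gradient (f i) (traj (f i) ηl θ k) - gradient (f i) θ)) :
    g = ηl • ∑ k ∈ Finset.range (K i), gradient (f i) (traj (f i) ηl θ k) ∧
    g = (ηl * (K i : ℝ)) • gradient (f i) θ + e ∧
    ‖e‖ ≤ L * Gf / 2 * ηl ^ 2 * (K i : ℝ) * ((K i : ℝ) - 1) :=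
  local_drift_bound_general hd f L Gf ηl hLip hGf K θ i g e hg he
end

section
/- (Common descent certificate.) Let d, N ≥ 1, let f_1, …, f_N : ℝ^d → ℝ be differentiable with L-Lipschitz gradients and ‖∇f_i(θ)‖ ≤ G_f for all i, θ. Let ρ_1, …, ρ_N > 0 with Σ ρ_i = 1, F = Σ ρ_i f_i, ρ_min = min_i ρ_i, c = ρ_min / G_f. Fix η_l > 0, local step counts K_i ≥ 1 with K_max = max_i K_i, a point θ ∈ ℝ^d, and let g_i = η_l Σ_{k=0}^{K_i−1} ∇f_i(θ_i^{k}) be the accumulated client updates of the local gradient-descent trajectories θ_i^{0} = θ, θ_i^{k+1} = θ_i^{k} − η_l ∇f_i(θ_i^{k}). Suppose each g_i ≠ 0 and a vector g ∈ ℝ^d satisfies the exact alignment constraints ⟨g_i/‖g_i‖, g⟩ = ρ_i for all i, together with ‖g‖ ≤ G. Then ⟨∇F(θ), g⟩ ≥ c‖∇F(θ)‖² − B_drift · η_l (K_max − 1), where B_drift = (L G_f / 2)(G + Σ_{i=1}^N ρ_i²). -/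
/-! Each client direction `∇fᵢ(θ)` is within `L ηl G_f (Kᵢ - 1)/2` of the normalized local
update `gᵢ / (ηl Kᵢ)`, since the `k`-th local iterate is at distance at most `k ηl G_f` from `θ`.
The alignment `⟪gᵢ/‖gᵢ‖, g⟫ = ρᵢ` then gives `⟪∇fᵢ(θ), g⟫ ≥ ρᵢ ‖∇fᵢ(θ)‖ - (ρᵢ + G) · drift`,
and averaging with weights `ρᵢ` yields `⟪∇F(θ), g⟫ ≥ Σ ρᵢ² ‖∇fᵢ(θ)‖ - (G + Σ ρᵢ²) · drift`.
Finally `Σ ρᵢ² ‖∇fᵢ(θ)‖ ≥ ρ_min Σ ρᵢ ‖∇fᵢ(θ)‖ ≥ ρ_min ‖∇F(θ)‖ ≥ (ρ_min / G_f) ‖∇F(θ)‖²`,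
because `‖∇F(θ)‖ ≤ G_f`. -/

open scoped InnerProductSpace BigOperators

lemma sum_range_natCast_real (n : ℕ) :
    ∑ k ∈ Finset.range n, (k : ℝ) = n * ((n : ℝ) - 1) / 2 := by
  induction n with
  | zero => simp
  | succ n ih => rw [Finset.sum_range_succ, ih]; push_cast; ring

lemma inner_eq_mul_norm_of_inner_normalize_eq {E : Type*} [NormedAddCommGroup E]
    [InnerProductSpace ℝ E] {x g : E} {ρ : ℝ} (h : ⟪NormedSpace.normalize x, g⟫_ℝ = ρ) :
    ⟪x, g⟫_ℝ = ρ * ‖x‖ := by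
  rcases eq_or_ne x 0 with rfl | hx
  · simp
  · rw [← h, NormedSpace.normalize, real_inner_smul_left, mul_comm, mul_inv_cancel_left₀ (norm_ne_zero_iff.mpr hx)]

lemma mul_norm_sub_le_inner_of_norm_sub_le {E : Type*} [NormedAddCommGroup E]
    [InnerProductSpace ℝ E] {s w g : E} {ρ ε G : ℝ} (hρ : 0 ≤ ρ)
    (hs : ⟪s, g⟫_ℝ = ρ * ‖s‖) (hws : ‖w - s‖ ≤ ε) (hG : ‖g‖ ≤ G) :
    ρ * ‖w‖ - (ρ + G) * ε ≤ ⟪w, g⟫_ℝ := by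
  have hw : ‖w‖ ≤ ‖s‖ + ε := by
    linarith [norm_le_norm_add_norm_sub' w s]
  have hcross : |⟪w - s, g⟫_ℝ| ≤ ε * G :=
    (abs_real_inner_le_norm _ _).trans
      (mul_le_mul hws hG (norm_nonneg _) ((norm_nonneg _).trans hws))
  have hsplit : ⟪w, g⟫_ℝ = ⟪s, g⟫_ℝ + ⟪w - s, g⟫_ℝ := by
    rw [inner_sub_left]; ring
  rw [hsplit, hs]
  nlinarith [neg_abs_le ⟪w - s, g⟫_ℝ, mul_le_mul_of_nonneg_left hw hρ]

section LocalGradientDescent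

variable {E : Type*} [NormedAddCommGroup E] [InnerProductSpace ℝ E] [CompleteSpace E]
  {f : E → ℝ} {L Gf ηl : ℝ} {θ : E}

variable (f ηl θ) in
noncomputable def localUpdate (K : ℕ) : E :=
  ηl • ∑ k ∈ Finset.range K, gradient f (traj f ηl θ k)

lemma norm_sub_traj_le (hηl : 0 ≤ ηl) (hGf : ∀ x, ‖gradient f x‖ ≤ Gf) (k : ℕ) :
    ‖θ - traj f ηl θ k‖ ≤ k * (ηl * Gf) := by
  induction k with
  | zero => simp [traj]
  | succ k ih =>
    have hstep : θ - traj f ηl θ (k + 1)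
        = (θ - traj f ηl θ k) + ηl • gradient f (traj f ηl θ k) := by
      simp only [traj]; abel
    calc ‖θ - traj f ηl θ (k + 1)‖
        ≤ ‖θ - traj f ηl θ k‖ + ηl * ‖gradient f (traj f ηl θ k)‖ := by
          rw [hstep, ← norm_smul_of_nonneg hηl]; exact norm_add_le _ _
      _ ≤ k * (ηl * Gf) + ηl * Gf := by gcongr; exact hGf _
      _ = (k + 1 : ℕ) * (ηl * Gf) := by push_cast; ring

lemma norm_nsmul_gradient_sub_sum_gradient_traj_le (hL : 0 ≤ L)
    (hLip : ∀ x y, ‖gradient f x - gradient f y‖ ≤ L * ‖x - y‖)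
    (hGf : ∀ x, ‖gradient f x‖ ≤ Gf) (hηl : 0 ≤ ηl) (K : ℕ) :
    ‖(K : ℝ) • gradient f θ - ∑ k ∈ Finset.range K, gradient f (traj f ηl θ k)‖
      ≤ L * (ηl * Gf) * (K * ((K : ℝ) - 1) / 2) := by
  have hsum : (K : ℝ) • gradient f θ - ∑ k ∈ Finset.range K, gradient f (traj f ηl θ k)
      = ∑ k ∈ Finset.range K, (gradient f θ - gradient f (traj f ηl θ k)) := by
    rw [Finset.sum_sub_distrib, Finset.sum_const, Finset.card_range, Nat.cast_smul_eq_nsmul]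
  calc _ ≤ ∑ k ∈ Finset.range K, ‖gradient f θ - gradient f (traj f ηl θ k)‖ :=
        hsum ▸ norm_sum_le _ _
    _ ≤ ∑ k ∈ Finset.range K, L * (ηl * Gf) * k := by
        gcongr with k
        calc _ ≤ L * ‖θ - traj f ηl θ k‖ := hLip _ _
          _ ≤ L * (k * (ηl * Gf)) := by gcongr; exact norm_sub_traj_le hηl hGf k
          _ = L * (ηl * Gf) * k := by ring
    _ = L * (ηl * Gf) * (K * ((K : ℝ) - 1) / 2) := by
        rw [← Finset.mul_sum, sum_range_natCast_real]

lemma sub_le_inner_gradient_of_inner_normalize_localUpdate_eq {ρ G : ℝ} {K Kmax : ℕ} {g : E}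
    (hL : 0 ≤ L) (hLip : ∀ x y, ‖gradient f x - gradient f y‖ ≤ L * ‖x - y‖)
    (hGf : ∀ x, ‖gradient f x‖ ≤ Gf) (hρ : 0 ≤ ρ) (hηl : 0 < ηl) (hK : 1 ≤ K)
    (hKmax : K ≤ Kmax) (hG : ‖g‖ ≤ G)
    (halign : ⟪NormedSpace.normalize (localUpdate f ηl θ K), g⟫_ℝ = ρ) :
    ρ * ‖gradient f θ‖ - (ρ + G) * (L * Gf / 2 * (ηl * ((Kmax : ℝ) - 1)))
      ≤ ⟪gradient f θ, g⟫_ℝ := by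
  set s := ∑ k ∈ Finset.range K, gradient f (traj f ηl θ k)
  have hs : ⟪s, g⟫_ℝ = ρ * ‖s‖ := by
    rw [localUpdate, NormedSpace.normalize_smul_of_pos hηl] at halign
    exact inner_eq_mul_norm_of_inner_normalize_eq halign
  have hK0 : (0 : ℝ) < K := by exact_mod_cast hK
  have hGf0 : 0 ≤ Gf := (norm_nonneg _).trans (hGf θ)
  have hG0 : 0 ≤ G := (norm_nonneg _).trans hG
  have hKK : ((K : ℝ) - 1) ≤ (Kmax : ℝ) - 1 := by gcongr
  have hclient := mul_norm_sub_le_inner_of_norm_sub_le hρ hs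
    (norm_nsmul_gradient_sub_sum_gradient_traj_le (θ := θ) hL hLip hGf hηl.le K) hG
  rw [norm_smul_of_nonneg hK0.le, real_inner_smul_left] at hclient
  have hKdrift : ρ * ‖gradient f θ‖ - (ρ + G) * (L * Gf / 2 * (ηl * ((K : ℝ) - 1)))
      ≤ ⟪gradient f θ, g⟫_ℝ := by
    refine le_of_mul_le_mul_left ?_ hK0
    linarith
  exact le_trans (by gcongr) hKdrift

end LocalGradientDescent

lemma gradient_sum_const_mul {E : Type*} [NormedAddCommGroup E] [InnerProductSpace ℝ E]
    [CompleteSpace E] {ι : Type*} (s : Finset ι) (ρ : ι → ℝ) {f : ι → E → ℝ} {θ : E}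
    (hf : ∀ i ∈ s, DifferentiableAt ℝ (f i) θ) :
    gradient (fun x => ∑ i ∈ s, ρ i * f i x) θ = ∑ i ∈ s, ρ i • gradient (f i) θ := by
  have hderiv : HasFDerivAt (fun x => ∑ i ∈ s, ρ i * f i x)
      (∑ i ∈ s, ρ i • InnerProductSpace.toDual ℝ E (gradient (f i) θ)) θ :=
    HasFDerivAt.fun_sum fun i hi => (hf i hi).hasGradientAt.hasFDerivAt.const_mul (ρ i)
  simp only [← map_smul, ← map_sum] at hderiv
  rw [hderiv.hasGradientAt.gradient, LinearIsometryEquiv.symm_apply_apply]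

lemma div_mul_norm_sum_smul_sq_le {E : Type*} [NormedAddCommGroup E] [InnerProductSpace ℝ E]
    {ι : Type*} (s : Finset ι) {ρ : ι → ℝ} {v : ι → E} {ρmin Gf : ℝ} (hρmin : 0 ≤ ρmin)
    (hρ : ∀ i ∈ s, ρmin ≤ ρ i) (hρsum : ∑ i ∈ s, ρ i = 1) (hv : ∀ i ∈ s, ‖v i‖ ≤ Gf) :
    ρmin / Gf * ‖∑ i ∈ s, ρ i • v i‖ ^ 2 ≤ ∑ i ∈ s, ρ i ^ 2 * ‖v i‖ := by
  have hρ0 : ∀ i ∈ s, 0 ≤ ρ i := fun i hi => hρmin.trans (hρ i hi)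
  have htri : ‖∑ i ∈ s, ρ i • v i‖ ≤ ∑ i ∈ s, ρ i * ‖v i‖ :=
    (norm_sum_le _ _).trans_eq (Finset.sum_congr rfl fun i hi => norm_smul_of_nonneg (hρ0 i hi) _)
  have hGf : ∑ i ∈ s, ρ i * ‖v i‖ ≤ Gf :=
    calc _ ≤ ∑ i ∈ s, ρ i * Gf := by gcongr with i hi; exacts [hρ0 i hi, hv i hi]
      _ = Gf := by rw [← Finset.sum_mul, hρsum, one_mul]
  set n := ‖∑ i ∈ s, ρ i • v i‖
  have hn : 0 ≤ n := norm_nonneg _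
  calc ρmin / Gf * n ^ 2 = ρmin * n * (n / Gf) := by ring
    _ ≤ ρmin * n * 1 := by
        gcongr; exact div_le_one_of_le₀ (htri.trans hGf) (hn.trans (htri.trans hGf))
    _ ≤ ρmin * ∑ i ∈ s, ρ i * ‖v i‖ := by rw [mul_one]; gcongr
    _ ≤ ∑ i ∈ s, ρ i ^ 2 * ‖v i‖ := by
        rw [Finset.mul_sum]
        refine Finset.sum_le_sum fun i hi => ?_
        rw [sq, mul_assoc]
        exact mul_le_mul_of_nonneg_right (hρ i hi) (mul_nonneg (hρ0 i hi) (norm_nonneg _))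

theorem common_descent_certificate_general {d N : ℕ} (hd : 1 ≤ d) (hN : 1 ≤ N)
    (f : Fin N → EuclideanSpace ℝ (Fin d) → ℝ) (L Gf : ℝ)
    (hdiff : ∀ i, Differentiable ℝ (f i))
    (hLip : ∀ i x y, ‖gradient (f i) x - gradient (f i) y‖ ≤ L * ‖x - y‖)
    (hGf : ∀ i x, ‖gradient (f i) x‖ ≤ Gf)
    (ρ : Fin N → ℝ) (hρpos : ∀ i, 0 < ρ i) (hρsum : ∑ i, ρ i = 1)
    (F : EuclideanSpace ℝ (Fin d) → ℝ) (hF : F = fun x => ∑ i, ρ i * f i x)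
    (ρmin : ℝ) (hρminlb : ∀ i, ρmin ≤ ρ i) (hρminmem : ∃ i, ρ i = ρmin)
    (c : ℝ) (hc : c = ρmin / Gf)
    (ηl : ℝ) (hηl : 0 < ηl)
    (K : Fin N → ℕ) (hK : ∀ i, 1 ≤ K i)
    (Kmax : ℕ) (hKmaxub : ∀ i, K i ≤ Kmax)
    (θ : EuclideanSpace ℝ (Fin d))
    (gI : Fin N → EuclideanSpace ℝ (Fin d))
    (hgI : ∀ i, gI i = ηl • ∑ k ∈ Finset.range (K i),
        gradient (f i) (traj (f i) ηl θ k))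
    (g : EuclideanSpace ℝ (Fin d))
    (halign : ∀ i, ⟪‖gI i‖⁻¹ • gI i, g⟫_ℝ = ρ i)
    (G : ℝ) (hG : ‖g‖ ≤ G)
    (Bdrift : ℝ) (hB : Bdrift = L * Gf / 2 * (G + ∑ i, (ρ i) ^ 2)) :
    c * ‖gradient F θ‖ ^ 2 - Bdrift * (ηl * ((Kmax : ℝ) - 1)) ≤ ⟪gradient F θ, g⟫_ℝ := by
  have hL : 0 ≤ L := by
    have h := hLip ⟨0, hN⟩ (EuclideanSpace.single ⟨0, hd⟩ 1) 0
    rw [sub_zero, PiLp.norm_single, norm_one, mul_one] at h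
    exact (norm_nonneg _).trans h
  have hρmin : 0 ≤ ρmin := by
    obtain ⟨i, hi⟩ := hρminmem
    exact hi ▸ (hρpos i).le
  have hgradF : gradient F θ = ∑ i, ρ i • gradient (f i) θ :=
    hF ▸ gradient_sum_const_mul _ ρ fun i _ => (hdiff i).differentiableAt
  set δ := L * Gf / 2 * (ηl * ((Kmax : ℝ) - 1))
  have hclient i : ρ i * ‖gradient (f i) θ‖ - (ρ i + G) * δ ≤ ⟪gradient (f i) θ, g⟫_ℝ :=
    sub_le_inner_gradient_of_inner_normalize_localUpdate_eq hL (hLip i) (hGf i)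
      (hρpos i).le hηl (hK i) (hKmaxub i) hG ((hgI i).symm ▸ halign i :)
  calc c * ‖gradient F θ‖ ^ 2 - Bdrift * (ηl * ((Kmax : ℝ) - 1))
      ≤ ∑ i, ρ i ^ 2 * ‖gradient (f i) θ‖ - (G + ∑ i, ρ i ^ 2) * δ := by
        have hsq := div_mul_norm_sum_smul_sq_le Finset.univ hρmin (fun i _ => hρminlb i) hρsum
          (fun i _ => hGf i θ)
        have hdrift : Bdrift * (ηl * ((Kmax : ℝ) - 1)) = (G + ∑ i, ρ i ^ 2) * δ := by
          rw [hB]; ring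
        rw [hc, hgradF, hdrift]
        linarith
    _ = ∑ i, ρ i * (ρ i * ‖gradient (f i) θ‖ - (ρ i + G) * δ) := by
        simp only [mul_sub, ← mul_assoc, ← sq, ← Finset.sum_mul, Finset.sum_sub_distrib, mul_add,
          Finset.sum_add_distrib, hρsum]
        ring
    _ ≤ ∑ i, ρ i * ⟪gradient (f i) θ, g⟫_ℝ := by
        gcongr with i; exacts [(hρpos i).le, hclient i]
    _ = ⟪gradient F θ, g⟫_ℝ := by
        simp only [hgradF, sum_inner, real_inner_smul_left]

/-- **Common descent certificate.** If the aggregate `g` satisfies the exact alignment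
constraints `⟪gᵢ/‖gᵢ‖, g⟫ = ρᵢ` with the accumulated client updates `gᵢ`, and `‖g‖ ≤ G`,
then `⟪∇F(θ), g⟫ ≥ c‖∇F(θ)‖² − B_drift ηl (K_max − 1)`, where `c = ρ_min/G_f` and
`B_drift = (L G_f/2)(G + Σ ρᵢ²)`. -/
theorem common_descent_certificate {d N : ℕ} (hd : 1 ≤ d) (hN : 1 ≤ N)
    (f : Fin N → EuclideanSpace ℝ (Fin d) → ℝ) (L Gf : ℝ)
    (hdiff : ∀ i, Differentiable ℝ (f i))
    (hLip : ∀ i x y, ‖gradient (f i) x - gradient (f i) y‖ ≤ L * ‖x - y‖)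
    (hGf : ∀ i x, ‖gradient (f i) x‖ ≤ Gf)
    (ρ : Fin N → ℝ) (hρpos : ∀ i, 0 < ρ i) (hρsum : ∑ i, ρ i = 1)
    (F : EuclideanSpace ℝ (Fin d) → ℝ) (hF : F = fun x => ∑ i, ρ i * f i x)
    (ρmin : ℝ) (hρminlb : ∀ i, ρmin ≤ ρ i) (hρminmem : ∃ i, ρ i = ρmin)
    (c : ℝ) (hc : c = ρmin / Gf)
    (ηl : ℝ) (hηl : 0 < ηl)
    (K : Fin N → ℕ) (hK : ∀ i, 1 ≤ K i)
    (Kmax : ℕ) (hKmaxub : ∀ i, K i ≤ Kmax) (hKmaxmem : ∃ i, K i = Kmax)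
    (θ : EuclideanSpace ℝ (Fin d))
    (gI : Fin N → EuclideanSpace ℝ (Fin d))
    (hgI : ∀ i, gI i = ηl • ∑ k ∈ Finset.range (K i),
        gradient (f i) (traj (f i) ηl θ k))
    (hne : ∀ i, gI i ≠ 0)
    (g : EuclideanSpace ℝ (Fin d))
    (halign : ∀ i, ⟪‖gI i‖⁻¹ • gI i, g⟫_ℝ = ρ i)
    (G : ℝ) (hG : ‖g‖ ≤ G)
    (Bdrift : ℝ) (hB : Bdrift = L * Gf / 2 * (G + ∑ i, (ρ i) ^ 2)) :
    c * ‖gradient F θ‖ ^ 2 - Bdrift * (ηl * ((Kmax : ℝ) - 1)) ≤ ⟪gradient F θ, g⟫_ℝ :=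
  common_descent_certificate_general hd hN f L Gf hdiff hLip hGf ρ hρpos hρsum F hF ρmin hρminlb
    hρminmem c hc ηl hηl K hK Kmax hKmaxub θ gI hgI g halign G hG Bdrift hB
end
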